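/- Let p be prime and 1 ≤ r < p. Suppose S_λ(rξ) = λ(r)·S_λ(ξ) for all ξ ∈ ℤ/pℤ, where S_λ(ξ) = ∑_{1 ≤ n < p} λ(n)·exp(2πi·nξ/p). Then for every 1 ≤ m < p, λ(p·{rm/p}) = λ(r)·λ(m), where {x} denotes the fractional part, so p·{rm/p} is the residue of rm mod p in [1, p−1]. -/
import Mathlib

open Finset

def lam (n : ℕ) : ℤ := (-1) ^ (ArithmeticFunction.cardFactors n)

noncomputable def Slam (p : ℕ) (ξ : ℕ) : ℂ :=
  ∑ n ∈ Finset.Ico 1 p, (lam n : ℂ) * Complex.exp (2 * Real.pi * Complex.I * (n * ξ) / p)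

lemma lam_unit (n : ℕ) : lam n = 1 ∨ lam n = -1 := by
  unfold lam
  rcases Nat.even_or_odd (ArithmeticFunction.cardFactors n) with h | h
  · left; exact h.neg_one_pow
  · right; exact h.neg_one_pow

lemma exp_eq_pow (p : ℕ) (k : ℕ) :
    Complex.exp (2 * Real.pi * Complex.I * k / p)
      = Complex.exp (2 * Real.pi * Complex.I / p) ^ k := by
  rw [← Complex.exp_nat_mul]
  congr 1
  ring

lemma sum_pow_zeta (p : ℕ) (hp : p ≠ 0) (k : ℕ) :
    ∑ ξ ∈ range p, (Complex.exp (2 * Real.pi * Complex.I / p)) ^ (k * ξ)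
      = if p ∣ k then (p : ℂ) else 0 := by
  have hζ := Complex.isPrimitiveRoot_exp p hp
  set ζ := Complex.exp (2 * Real.pi * Complex.I / p) with hζd
  simp_rw [pow_mul]
  by_cases h : p ∣ k
  · have h1 : ζ ^ k = 1 := (hζ.pow_eq_one_iff_dvd k).mpr h
    simp [h1, h]
  · have h1 : ζ ^ k ≠ 1 := fun hh => h ((hζ.pow_eq_one_iff_dvd k).mp hh)
    rw [if_neg h, geom_sum_eq h1]
    have h2 : (ζ ^ k) ^ p = 1 := by
      rw [← pow_mul, mul_comm, pow_mul, hζ.pow_eq_one, one_pow]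
    simp [h2]

lemma dvd_iff_zmod (p : ℕ) [NeZero p] (a k : ℕ) (ha : a ≤ p) :
    p ∣ k + (p - a) ↔ (k : ZMod p) = (a : ZMod p) := by
  constructor
  · intro h
    have := (ZMod.natCast_eq_zero_iff _ p).mpr h
    push_cast [Nat.cast_sub ha] at this
    rw [ZMod.natCast_self] at this
    linear_combination this
  · intro h
    apply (ZMod.natCast_eq_zero_iff _ p).mp
    push_cast [Nat.cast_sub ha]
    rw [ZMod.natCast_self]
    linear_combination h

lemma cast_inj_lt (p a b : ℕ) (ha : a < p) (hb : b < p) :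
    ((a : ZMod p) = (b : ZMod p)) ↔ a = b := by
  rw [ZMod.natCast_eq_natCast_iff, Nat.ModEq, Nat.mod_eq_of_lt ha, Nat.mod_eq_of_lt hb]

theorem stmt_16 (p : ℕ) (hp : p.Prime) (r : ℕ) (hr1 : 1 ≤ r) (hrp : r < p)
    (hdil : ∀ ξ : ℕ, Slam p (r * ξ) = (lam r : ℂ) * Slam p ξ) :
    ∀ m, 1 ≤ m → m < p → lam ((r * m) % p) = lam r * lam m := by
  intro m hm1 hmp
  haveI : NeZero p := ⟨hp.ne_zero⟩
  haveI : Fact p.Prime := ⟨hp⟩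
  have hp0 : (0:ℕ) < p := hp.pos
  set ζ : ℂ := Complex.exp (2 * Real.pi * Complex.I / p) with hζd
  set m' : ℕ := (r * m) % p with hm'd
  have hpm : ¬ p ∣ r * m := by
    intro h
    rcases (Nat.Prime.dvd_mul hp).mp h with h | h
    · exact absurd (Nat.le_of_dvd (by omega) h) (by omega)
    · exact absurd (Nat.le_of_dvd (by omega) h) (by omega)
  have hm'1 : 1 ≤ m' := by
    rcases Nat.eq_zero_or_pos m' with h | h
    · exact absurd (Nat.dvd_of_mod_eq_zero h) hpm
    · exact h
  have hm'p : m' < p := Nat.mod_lt _ hp0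
  have hm'mem : m' ∈ Finset.Ico 1 p := by simp [hm'1, hm'p]
  have hmmem : m ∈ Finset.Ico 1 p := by simp [hm1, hmp]
  have hm'cast : ((m' : ℕ) : ZMod p) = (r : ZMod p) * m := by
    rw [hm'd]
    push_cast [ZMod.natCast_mod]
    ring
  have hr0 : (r : ZMod p) ≠ 0 := by
    rw [Ne, ZMod.natCast_eq_zero_iff]
    intro h
    exact absurd (Nat.le_of_dvd (by omega) h) (by omega)
  -- rewrite Slam as sums of powers of ζ
  have hSlam : ∀ s ξ : ℕ, Slam p (s * ξ) = ∑ n ∈ Finset.Ico 1 p, (lam n : ℂ) * ζ ^ (n * s * ξ) := by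
    intro s ξ
    unfold Slam
    refine Finset.sum_congr rfl fun n _ => ?_
    rw [hζd, ← exp_eq_pow]
    congr 2
    push_cast
    ring
  -- key double sum identity
  have key : ∀ s : ℕ, ∑ ξ ∈ range p, Slam p (s * ξ) * ζ ^ ((p - m') * ξ)
      = ∑ n ∈ Finset.Ico 1 p, (lam n : ℂ) * (if p ∣ n * s + (p - m') then (p : ℂ) else 0) := by
    intro s
    simp_rw [hSlam s, Finset.sum_mul]
    rw [Finset.sum_comm]
    refine Finset.sum_congr rfl fun n _ => ?_
    rw [← sum_pow_zeta p hp.ne_zero, Finset.mul_sum]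
    refine Finset.sum_congr rfl fun ξ _ => ?_
    rw [mul_assoc, ← pow_add, ← add_mul]
  -- conditions
  have cond_r : ∀ n ∈ Finset.Ico 1 p, (p ∣ n * r + (p - m') ↔ n = m) := by
    intro n hn
    simp only [Finset.mem_Ico] at hn
    rw [dvd_iff_zmod p m' (n * r) hm'p.le, hm'cast]
    rw [show ((n * r : ℕ) : ZMod p) = (n : ZMod p) * r by push_cast; ring]
    constructor
    · intro h
      have : (n : ZMod p) = (m : ZMod p) :=
        mul_right_cancel₀ hr0 (by linear_combination h)
      exact (cast_inj_lt p n m hn.2 hmp).mp this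
    · intro h
      rw [h]; ring
  have cond_1 : ∀ n ∈ Finset.Ico 1 p, (p ∣ n * 1 + (p - m') ↔ n = m') := by
    intro n hn
    simp only [Finset.mem_Ico] at hn
    rw [mul_one, dvd_iff_zmod p m' n hm'p.le]
    exact cast_inj_lt p n m' hn.2 hm'p
  -- evaluate both sides
  have eval : ∀ (s a : ℕ), a ∈ Finset.Ico 1 p →
      (∀ n ∈ Finset.Ico 1 p, (p ∣ n * s + (p - m') ↔ n = a)) →
      ∑ n ∈ Finset.Ico 1 p, (lam n : ℂ) * (if p ∣ n * s + (p - m') then (p : ℂ) else 0)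
        = (lam a : ℂ) * p := by
    intro s a ha cond
    have step : ∑ n ∈ Finset.Ico 1 p, (lam n : ℂ) * (if p ∣ n * s + (p - m') then (p : ℂ) else 0)
        = ∑ n ∈ Finset.Ico 1 p, (if n = a then (lam n : ℂ) * p else 0) := by
      refine Finset.sum_congr rfl fun n hn => ?_
      rw [mul_ite, mul_zero, if_congr (cond n hn) rfl rfl]
    rw [step, Finset.sum_ite_eq' (Finset.Ico 1 p) a (fun n => (lam n : ℂ) * p), if_pos ha]
  have lhs : ∑ ξ ∈ range p, Slam p (r * ξ) * ζ ^ ((p - m') * ξ) = (lam m : ℂ) * p := by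
    rw [key r]; exact eval r m hmmem cond_r
  have rhs : ∑ ξ ∈ range p, Slam p (r * ξ) * ζ ^ ((p - m') * ξ)
      = (lam r : ℂ) * ((lam m' : ℂ) * p) := by
    calc ∑ ξ ∈ range p, Slam p (r * ξ) * ζ ^ ((p - m') * ξ)
        = ∑ ξ ∈ range p, ((lam r : ℂ) * Slam p (1 * ξ)) * ζ ^ ((p - m') * ξ) := by
          refine Finset.sum_congr rfl fun ξ _ => ?_
          rw [one_mul, hdil ξ]
      _ = (lam r : ℂ) * ∑ ξ ∈ range p, Slam p (1 * ξ) * ζ ^ ((p - m') * ξ) := by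
          rw [Finset.mul_sum]; refine Finset.sum_congr rfl fun ξ _ => by ring
      _ = (lam r : ℂ) * ((lam m' : ℂ) * p) := by
          rw [key 1, eval 1 m' hm'mem cond_1]
  have hpC : (p : ℂ) ≠ 0 := Nat.cast_ne_zero.mpr hp.ne_zero
  have main : (lam m : ℂ) = (lam r : ℂ) * (lam m' : ℂ) := by
    have h := lhs.symm.trans rhs
    exact mul_right_cancel₀ hpC (by linear_combination h)
  have mainZ : lam m = lam r * lam m' := by exact_mod_cast main
  rcases lam_unit r with h | h <;> rw [h] at mainZ ⊢ <;> omega
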